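/- arXiv:1005.0495 — 3 statements merged into one kernel-verified Lean document; each statement's English description precedes it below -/
import Mathlib

section
/- If g is a finite-dimensional Lie algebra with structure constants C_{AB}^C (i.e., [T_A, T_B] = C_{AB}^C T_C) and S is a finite abelian semigroup with selectors K_{αβ}^γ (equal to 1 if λ_α λ_β = λ_γ and 0 otherwise), then the constants C_{(A,α)(B,β)}^{(C,γ)} = C_{AB}^C K_{αβ}^γ are antisymmetric in the pairs (A,α), (B,β) and satisfy the Jacobi identity for structure constants. -/
/-!
The selectors contract associatively, `∑_δ K_{αβ}^δ K_{δγ}^ε = K_{(αβ)γ}^ε`, so each of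
the three cyclic terms factors as the corresponding term for `g` times a selector. By
commutativity and associativity of `S` all three selectors equal `K_{(αβ)γ}^ε`, leaving
the Jacobi sum of `g` times a common factor.
-/

open Finset

namespace SemigroupExpansion

section Selector

variable {K S : Type*} [CommSemiring K] [CommSemigroup S] [DecidableEq S]

def selector (α β γ : S) : K := if α * β = γ then 1 else 0

theorem selector_comm (α β γ : S) : (selector α β γ : K) = selector β α γ := by
  rw [selector, selector, mul_comm]

theorem sum_selector_mul_selector [Fintype S] (α β γ ε : S) :
    ∑ δ, (selector α β δ : K) * selector δ γ ε = selector (α * β) γ ε := by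
  simp only [selector, ite_mul, one_mul, zero_mul, sum_ite_eq, mem_univ, if_true]

end Selector

section Expansion

variable {K ι S : Type*} [CommSemigroup S] [DecidableEq S]

def expandedConstants [CommSemiring K] (C : ι → ι → ι → K) (p q r : ι × S) : K :=
  C p.1 q.1 r.1 * selector p.2 q.2 r.2

theorem expandedConstants_antisymm [CommRing K] {C : ι → ι → ι → K}
    (hanti : ∀ A B E, C A B E = -C B A E) (p q r : ι × S) :
    expandedConstants C p q r = -expandedConstants C q p r := by
  rw [expandedConstants, expandedConstants, hanti, selector_comm, neg_mul]

theorem sum_expandedConstants_mul [Fintype ι] [Fintype S] [CommSemiring K]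
    (C : ι → ι → ι → K) (p q r e : ι × S) :
    ∑ d, expandedConstants C p q d * expandedConstants C d r e =
      (∑ D, C p.1 q.1 D * C D r.1 e.1) * selector (p.2 * q.2) r.2 e.2 := by
  have hcontract : ∀ D, ∑ δ, expandedConstants C p q (D, δ) * expandedConstants C (D, δ) r e =
      C p.1 q.1 D * C D r.1 e.1 * selector (p.2 * q.2) r.2 e.2 := fun D => by
    simp only [expandedConstants, mul_mul_mul_comm, ← mul_sum, sum_selector_mul_selector]
  rw [Fintype.sum_prod_type, sum_mul]
  exact sum_congr rfl fun D _ => hcontract D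

theorem expandedConstants_jacobi [Fintype ι] [Fintype S] [CommSemiring K] {C : ι → ι → ι → K}
    (hjac : ∀ A B C' E,
      ∑ D, (C A B D * C D C' E + C C' A D * C D B E + C B C' D * C D A E) = 0)
    (p q r e : ι × S) :
    ∑ d, (expandedConstants C p q d * expandedConstants C d r e +
      expandedConstants C r p d * expandedConstants C d q e +
      expandedConstants C q r d * expandedConstants C d p e) = 0 := by
  have hrot₁ : r.2 * p.2 * q.2 = p.2 * q.2 * r.2 := mul_rotate r.2 p.2 q.2
  have hrot₂ : q.2 * r.2 * p.2 = p.2 * q.2 * r.2 := (mul_rotate q.2 r.2 p.2).trans hrot₁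
  simp only [sum_add_distrib, sum_expandedConstants_mul]
  simp only [selector, hrot₁, hrot₂, ← add_mul, ← sum_add_distrib, hjac, zero_mul]

end Expansion

end SemigroupExpansion

/-- the expanded structure constants
`C_{(A,α)(B,β)}^{(C,γ)} = C_{AB}^C K_{αβ}^γ` are antisymmetric and satisfy the Jacobi
identity for structure constants. -/
theorem expanded_structure_constants
    {K ι S : Type*} [Field K] [Fintype ι] [Fintype S] [CommSemigroup S] [DecidableEq S]
    (C : ι → ι → ι → K)
    (hanti : ∀ A B E, C A B E = - C B A E)
    (hjac : ∀ A B C' E,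
      ∑ D, (C A B D * C D C' E + C C' A D * C D B E + C B C' D * C D A E) = 0) :
    let Ksel : S → S → S → K := fun α β γ => if α * β = γ then 1 else 0
    let CC : ι × S → ι × S → ι × S → K :=
      fun p q r => C p.1 q.1 r.1 * Ksel p.2 q.2 r.2
    (∀ p q r : ι × S, CC p q r = - CC q p r) ∧
    (∀ p q r e : ι × S,
      ∑ d : ι × S, (CC p q d * CC d r e + CC r p d * CC d q e + CC q r d * CC d p e) = 0) :=
  ⟨SemigroupExpansion.expandedConstants_antisymm hanti,
    SemigroupExpansion.expandedConstants_jacobi hjac⟩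
end

section
/- Given a Lie algebra g with invariant symmetric bilinear form B, the central extension g ⊗ K[z,z^{-1}] ⊕ K·k with bracket [x⊗z^m + a·k, y⊗z^n + b·k] = [x,y]⊗z^{m+n} + m δ_{m,-n} B(x,y)·k (and k central) satisfies the Jacobi identity, defining the (untwisted) affine Kac–Moody algebra. -/
/-!
Since `k` is central, the bracket only sees the loop components, and both Lie identities split
into one for the loop bracket `zBracket` and one for the cocycle `kmCocycle`. Everything is
additive in each argument, so it suffices to check these on homogeneous elements `x ⊗ z^m`.
There the loop identities are those of `L` with degrees adding up, and the cocycle identity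
reduces, when `m + n + p = 0`, to
`m B(x,[y,z]) + p B(z,[x,y]) + n B(y,[z,x]) = (m + n + p) B([x,y],z) = 0`
by invariance and symmetry of `B`.
-/

/-- The loop-algebra bracket on `g ⊗ K[z,z⁻¹]`, modelled as `ℤ →₀ L`. -/
noncomputable def zBracket {L : Type*} [LieRing L] (f g : ℤ →₀ L) : ℤ →₀ L :=
  f.sum fun m x => g.sum fun n y => Finsupp.single (m + n) ⁅x, y⁆

/-- The Kac–Moody cocycle `ω(x⊗z^m, y⊗z^n) = m δ_{m,-n} B(x,y)`, extended bilinearly. -/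
noncomputable def kmCocycle {K L : Type*} [Field K] [LieRing L] [LieAlgebra K L]
    (B : L →ₗ[K] L →ₗ[K] K) (f g : ℤ →₀ L) : K :=
  f.sum fun m x => g.sum fun n y => if m + n = 0 then (m : K) * B x y else 0

/-- The affine Kac–Moody bracket on `L(g) ⊕ K·k`:
`[x⊗z^m + a·k, y⊗z^n + b·k] = [x,y]⊗z^{m+n} + m δ_{m,-n} B(x,y)·k` with `k` central. -/
noncomputable def kmBracket {K L : Type*} [Field K] [LieRing L] [LieAlgebra K L]
    (B : L →ₗ[K] L →ₗ[K] K) (u v : (ℤ →₀ L) × K) : (ℤ →₀ L) × K :=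
  (zBracket u.1 v.1, kmCocycle B u.1 v.1)

namespace Finsupp

variable {α M N : Type*} [AddZeroClass M] [AddLeftCancelMonoid N]

theorem additive_eq_zero (T : (α →₀ M) → N) (map_add : ∀ f f', T (f + f') = T f + T f')
    (map_single : ∀ a x, T (single a x) = 0) (f : α →₀ M) : T f = 0 := by
  induction f using Finsupp.induction_linear with
  | zero => simpa using map_add 0 0
  | add f f' hf hf' => rw [map_add, hf, hf', add_zero]
  | single a x => exact map_single a x

theorem triadditive_eq_zero (T : (α →₀ M) → (α →₀ M) → (α →₀ M) → N)
    (add₁ : ∀ f f' g h, T (f + f') g h = T f g h + T f' g h)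
    (add₂ : ∀ f g g' h, T f (g + g') h = T f g h + T f g' h)
    (add₃ : ∀ f g h h', T f g (h + h') = T f g h + T f g h')
    (single_single_single : ∀ a b c x y z, T (single a x) (single b y) (single c z) = 0)
    (f g h : α →₀ M) : T f g h = 0 :=
  additive_eq_zero (T · g h) (add₁ · · g h) (fun a x =>
    additive_eq_zero (T (single a x) · h) (add₂ _ · · h) (fun b y =>
      additive_eq_zero (T (single a x) (single b y)) (add₃ _ _) (single_single_single a b · x y)
        h) g) f

end Finsupp

section LoopBracket

variable {L : Type*} [LieRing L]

lemma zBracket_zero_left (g : ℤ →₀ L) : zBracket 0 g = 0 := Finsupp.sum_zero_index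

lemma zBracket_zero_right (f : ℤ →₀ L) : zBracket f 0 = 0 := by
  simp [zBracket]

lemma zBracket_add_left (f f' g : ℤ →₀ L) :
    zBracket (f + f') g = zBracket f g + zBracket f' g := by
  refine Finsupp.sum_add_index' (fun _ => by simp) fun _ _ _ => ?_
  simp [add_lie, Finsupp.single_add, Finsupp.sum_add]

lemma zBracket_add_right (f g g' : ℤ →₀ L) :
    zBracket f (g + g') = zBracket f g + zBracket f g' := by
  rw [zBracket, zBracket, zBracket, ← Finsupp.sum_add]
  refine Finsupp.sum_congr fun _ _ => Finsupp.sum_add_index' (fun _ => by simp) fun _ _ _ => ?_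
  simp [lie_add, Finsupp.single_add]

lemma zBracket_single_single (m n : ℤ) (x y : L) :
    zBracket (Finsupp.single m x) (Finsupp.single n y) = Finsupp.single (m + n) ⁅x, y⁆ := by
  simp [zBracket]

lemma zBracket_anticomm (f g : ℤ →₀ L) : zBracket f g = -zBracket g f := by
  rw [zBracket, zBracket, Finsupp.sum_comm, ← Finsupp.sum_neg]
  refine Finsupp.sum_congr fun n _ => ?_
  rw [← Finsupp.sum_neg]
  refine Finsupp.sum_congr fun m _ => ?_
  rw [← Finsupp.single_neg, lie_skew, add_comm]

lemma zBracket_jacobi (f g h : ℤ →₀ L) :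
    zBracket f (zBracket g h) + zBracket h (zBracket f g) + zBracket g (zBracket h f) = 0 := by
  refine Finsupp.triadditive_eq_zero
    (fun f g h : ℤ →₀ L => zBracket f (zBracket g h) + zBracket h (zBracket f g)
      + zBracket g (zBracket h f)) ?_ ?_ ?_ ?_ f g h
  iterate 3 · intros; simp only [zBracket_add_left, zBracket_add_right]; abel
  intro m n p x y z
  simp only [zBracket_single_single]
  rw [show p + (m + n) = m + (n + p) by ring, show n + (p + m) = m + (n + p) by ring,
    ← Finsupp.single_add, ← Finsupp.single_add, add_right_comm, lie_jacobi,
    Finsupp.single_zero]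

end LoopBracket

section Cocycle

variable {K L : Type*} [Field K] [LieRing L] [LieAlgebra K L] (B : L →ₗ[K] L →ₗ[K] K)

lemma kmCocycle_zero_left (g : ℤ →₀ L) : kmCocycle B 0 g = 0 := Finsupp.sum_zero_index

lemma kmCocycle_zero_right (f : ℤ →₀ L) : kmCocycle B f 0 = 0 := by
  simp [kmCocycle]

lemma kmCocycle_add_left (f f' g : ℤ →₀ L) :
    kmCocycle B (f + f') g = kmCocycle B f g + kmCocycle B f' g := by
  refine Finsupp.sum_add_index' (fun _ => by simp) fun _ _ _ => ?_
  rw [← Finsupp.sum_add]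
  refine Finsupp.sum_congr fun _ _ => ?_
  split_ifs <;> simp [mul_add]

lemma kmCocycle_add_right (f g g' : ℤ →₀ L) :
    kmCocycle B f (g + g') = kmCocycle B f g + kmCocycle B f g' := by
  rw [kmCocycle, kmCocycle, kmCocycle, ← Finsupp.sum_add]
  refine Finsupp.sum_congr fun _ _ => Finsupp.sum_add_index' (fun _ => by simp) fun _ _ _ => ?_
  split_ifs <;> simp [mul_add]

lemma kmCocycle_single_single (m n : ℤ) (x y : L) :
    kmCocycle B (Finsupp.single m x) (Finsupp.single n y)
      = if m + n = 0 then (m : K) * B x y else 0 := by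
  simp [kmCocycle]

variable {B}

lemma kmCocycle_anticomm (hsymm : ∀ x y : L, B x y = B y x) (f g : ℤ →₀ L) :
    kmCocycle B f g = -kmCocycle B g f := by
  rw [kmCocycle, kmCocycle, Finsupp.sum_comm, ← Finsupp.sum_neg]
  refine Finsupp.sum_congr fun n _ => ?_
  rw [← Finsupp.sum_neg]
  refine Finsupp.sum_congr fun m _ => ?_
  rw [add_comm n m, hsymm (g n)]
  split_ifs with h
  · rw [show n = -m by omega]
    push_cast
    ring
  · simp

lemma kmCocycle_jacobi (hsymm : ∀ x y : L, B x y = B y x)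
    (hinv : ∀ x y z : L, B ⁅x, y⁆ z = B x ⁅y, z⁆) (f g h : ℤ →₀ L) :
    kmCocycle B f (zBracket g h) + kmCocycle B h (zBracket f g)
      + kmCocycle B g (zBracket h f) = 0 := by
  refine Finsupp.triadditive_eq_zero
    (fun f g h : ℤ →₀ L => kmCocycle B f (zBracket g h) + kmCocycle B h (zBracket f g)
      + kmCocycle B g (zBracket h f)) ?_ ?_ ?_ ?_ f g h
  iterate 3
    · intros
      simp only [zBracket_add_left, zBracket_add_right, kmCocycle_add_left, kmCocycle_add_right]
      abel
  intro m n p x y z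
  have hx : B x ⁅y, z⁆ = B ⁅x, y⁆ z := (hinv x y z).symm
  have hz : B z ⁅x, y⁆ = B ⁅x, y⁆ z := hsymm z ⁅x, y⁆
  have hy : B y ⁅z, x⁆ = B ⁅x, y⁆ z := by rw [← hinv, hsymm, hinv]
  simp only [zBracket_single_single, kmCocycle_single_single, hx, hy, hz]
  rw [show p + (m + n) = m + n + p by ring, show n + (p + m) = m + n + p by ring,
    ← add_assoc]
  split_ifs with hdeg
  · have hdeg' : (m : K) + n + p = 0 := by simpa using congrArg (Int.cast : ℤ → K) hdeg
    linear_combination B ⁅x, y⁆ z * hdeg'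
  · simp

end Cocycle

/-- the affine Kac–Moody bracket (central extension of the loop algebra by
the cocycle built from an invariant symmetric bilinear form `B`) is antisymmetric and
satisfies the Jacobi identity. -/
theorem affineKacMoody_isLieAlgebra
    {K L : Type*} [Field K] [LieRing L] [LieAlgebra K L]
    (B : L →ₗ[K] L →ₗ[K] K)
    (hsymm : ∀ x y : L, B x y = B y x)
    (hinv : ∀ x y z : L, B ⁅x, y⁆ z = B x ⁅y, z⁆) :
    (∀ u v : (ℤ →₀ L) × K, kmBracket B u v = - kmBracket B v u) ∧
    (∀ u v w : (ℤ →₀ L) × K,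
      kmBracket B u (kmBracket B v w) + kmBracket B w (kmBracket B u v)
        + kmBracket B v (kmBracket B w u) = 0) ∧
    (∀ (a : K) (u : (ℤ →₀ L) × K), kmBracket B (0, a) u = 0 ∧ kmBracket B u (0, a) = 0) :=
  ⟨fun u v => Prod.ext (zBracket_anticomm u.1 v.1) (kmCocycle_anticomm hsymm u.1 v.1),
    fun u v w => Prod.ext (zBracket_jacobi u.1 v.1 w.1) (kmCocycle_jacobi hsymm hinv u.1 v.1 w.1),
    fun _ u => ⟨Prod.ext (zBracket_zero_left u.1) (kmCocycle_zero_left B u.1),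
      Prod.ext (zBracket_zero_right u.1) (kmCocycle_zero_right B u.1)⟩⟩
end

section
/- Let S be an abelian semigroup with a zero element 0_S (satisfying 0_S · λ = 0_S for all λ ∈ S), and g a Lie algebra. Then the subspace W_{0_S} = {(0_S, x) : x ∈ g} of the S-expanded algebra S ⊗ g is a Lie ideal, and the quotient (S ⊗ g)/W_{0_S} is isomorphic to the (S \ {0_S})-graded algebra obtained by setting all brackets landing in the 0_S-component to zero (the 0_S-reduced algebra). -/
/-!
Restriction to the indices `s ≠ 0_S` is a surjective linear map `S ⊗ g → ⊕_{s ≠ 0_S} g` whose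
kernel is `W_{0_S}`. It carries the expanded bracket to the reduced one: a product `αβ` involving
`0_S` is `0_S` and is killed by the restriction, and the remaining terms `(αβ, [x,y])` survive
exactly when `αβ ≠ 0_S`. Hence `W_{0_S}` is an ideal and the restriction induces the isomorphism.
-/

/-- The S-expanded bracket on `S →₀ L`. -/
noncomputable def sBracket {S : Type*} [Mul S] {L : Type*} [LieRing L]
    (f g : S →₀ L) : S →₀ L :=
  f.sum fun α x => g.sum fun β y => Finsupp.single (α * β) ⁅x, y⁆

/-- The 0_S-reduced bracket on `⊕_{α ≠ 0_S} g`: equal to `(αβ, [x,y])` when `αβ ≠ 0_S`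
and zero otherwise. -/
noncomputable def redBracket {S : Type*} [CommSemigroup S] [DecidableEq S] (z : S)
    {L : Type*} [LieRing L]
    (f g : {s : S // s ≠ z} →₀ L) : {s : S // s ≠ z} →₀ L :=
  f.sum fun α x => g.sum fun β y =>
    if h : (α : S) * (β : S) = z then 0 else Finsupp.single ⟨(α : S) * β, h⟩ ⁅x, y⁆

namespace Finsupp

section Zero

variable {α M N : Type*} [Zero M] {p : α → Prop}

theorem sum_subtypeDomain_index_of_eq_zero [AddCommMonoid N] {v : α →₀ M} {h : α → M → N}
    (hp : ∀ a, ¬p a → ∀ b, h a b = 0) :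
    (v.subtypeDomain p).sum (fun a b ↦ h a b) = v.sum h := by
  classical
  simp only [Finsupp.sum, support_subtypeDomain, subtypeDomain_apply]
  rw [Finset.sum_subtype_eq_sum_filter (fun a ↦ h a (v a))]
  exact Finset.sum_filter_of_ne fun a _ ha ↦ by_contra fun hpa ↦ ha (hp a hpa _)

theorem subtypeDomain_single [DecidablePred p] (a : α) (b : M) :
    (single a b).subtypeDomain p = if h : p a then single ⟨a, h⟩ b else 0 := by
  classical
  ext ⟨c, hc⟩
  split_ifs with h
  · simp only [subtypeDomain_apply, single_apply, Subtype.mk.injEq]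
  · rw [subtypeDomain_apply, single_eq_of_ne (by rintro rfl; exact h hc), coe_zero, Pi.zero_apply]

end Zero

variable {α R M : Type*} [Semiring R] [AddCommMonoid M] [Module R M] (p : α → Prop)

/-- Unlike `Finsupp.lsubtypeDomain`, the codomain is indexed by `Subtype p` rather than by a set. -/
noncomputable def lsubtypeDomainOf : (α →₀ M) →ₗ[R] Subtype p →₀ M where
  toFun := subtypeDomain p
  map_add' _ _ := subtypeDomain_add
  map_smul' _ _ := ext fun _ ↦ rfl

@[simp]
theorem lsubtypeDomainOf_apply (f : α →₀ M) :
    (lsubtypeDomainOf p : (α →₀ M) →ₗ[R] _) f = f.subtypeDomain p := rfl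

theorem lsubtypeDomainOf_surjective :
    Function.Surjective (lsubtypeDomainOf p : (α →₀ M) →ₗ[R] _) := by
  classical
  exact fun f ↦ ⟨f.extendDomain, subtypeDomain_extendDomain f⟩

theorem ker_lsubtypeDomainOf :
    LinearMap.ker (lsubtypeDomainOf p : (α →₀ M) →ₗ[R] _) = supported M R {a | ¬p a} := by
  ext f
  rw [LinearMap.mem_ker, lsubtypeDomainOf_apply, subtypeDomain_eq_zero_iff', mem_supported']
  simp only [Set.mem_ofPred_eq, not_not]

end Finsupp

section Reduction

open Finsupp

variable {S L : Type*} [CommSemigroup S] [DecidableEq S] [LieRing L] {z : S}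

theorem subtypeDomain_sBracket (hz : ∀ s, z * s = z) (f g : S →₀ L) :
    (sBracket f g).subtypeDomain (· ≠ z) =
      redBracket z (f.subtypeDomain (· ≠ z)) (g.subtypeDomain (· ≠ z)) := by
  have hz' : ∀ s, s * z = z := fun s ↦ mul_comm z s ▸ hz s
  let red (a b : S) (x y : L) : {s // s ≠ z} →₀ L :=
    if h : a * b = z then 0 else single ⟨a * b, h⟩ ⁅x, y⁆
  calc (sBracket f g).subtypeDomain (· ≠ z)
      = f.sum fun a x ↦ g.sum fun b y ↦ red a b x y := by
        unfold sBracket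
        simp only [subtypeDomain_finsupp_sum, subtypeDomain_single, red, dite_not]
    _ = f.sum fun a x ↦ (g.subtypeDomain (· ≠ z)).sum fun b y ↦ red a b x y := by
        refine sum_congr fun a _ ↦ (sum_subtypeDomain_index_of_eq_zero fun b hb y ↦ ?_).symm
        simp [red, not_not.mp hb, hz']
    _ = redBracket z (f.subtypeDomain (· ≠ z)) (g.subtypeDomain (· ≠ z)) := by
        refine (sum_subtypeDomain_index_of_eq_zero fun a ha x ↦ ?_).symm
        simp [red, not_not.mp ha, hz]

end Reduction

/-- if `S` has an absorbing (zero) element `0_S`, the summand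
`W_{0_S} = {(0_S, x)}` of `S ⊗ g` is a Lie ideal, and the quotient `(S ⊗ g)/W_{0_S}` is
isomorphic to the `0_S`-reduced algebra. -/
theorem sExpansion_zero_reduction
    {K S L : Type*} [Field K] [CommSemigroup S] [DecidableEq S]
    [LieRing L] [LieAlgebra K L]
    (z : S) (hz : ∀ s : S, z * s = z ∧ s * z = z) :
    let W : Submodule K (S →₀ L) := Finsupp.supported L K ({z} : Set S)
    (∀ f ∈ W, ∀ g : S →₀ L, sBracket f g ∈ W ∧ sBracket g f ∈ W) ∧
    ∃ E : ((S →₀ L) ⧸ W) ≃ₗ[K] ({s : S // s ≠ z} →₀ L),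
      ∀ f g : S →₀ L,
        E (Submodule.Quotient.mk (sBracket f g)) =
          redBracket z (E (Submodule.Quotient.mk f)) (E (Submodule.Quotient.mk g)) := by
  intro W
  let P : (S →₀ L) →ₗ[K] {s : S // s ≠ z} →₀ L := Finsupp.lsubtypeDomainOf (· ≠ z)
  have hker : W = LinearMap.ker P := by
    rw [Finsupp.ker_lsubtypeDomainOf]
    simp [W]
  have hP (f g : S →₀ L) : P (sBracket f g) = redBracket z (P f) (P g) :=
    subtypeDomain_sBracket (fun s ↦ (hz s).1) f g
  refine ⟨fun f hf g ↦ ?_, (Submodule.quotEquivOfEq W _ hker).trans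
    (P.quotKerEquivOfSurjective (Finsupp.lsubtypeDomainOf_surjective _)), fun f g ↦ hP f g⟩
  rw [hker, LinearMap.mem_ker] at hf ⊢
  rw [LinearMap.mem_ker, hP, hP, hf]
  simp [redBracket]
end
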